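/- arXiv:2005.12185 — 2 statements merged into one kernel-verified Lean document; each statement's English description precedes it below -/
import Mathlib

section
/- Let a_n be the total bitsum (total number of 1s) summed over all bimultus binary strings of length n. Then ∑_{n≥0} a_n z^n = z^2(2 - z)/(1 - z - z^2)^2 as formal power series; in particular a_2 = 2, a_3 = 3, a_4 = 8, a_5 = 15, a_6 = 30. -/
open scoped Classical

def Multus {n : ℕ} (f : Fin n → Bool) : Prop :=
  ∀ i : Fin n, f i = true →
    ∃ j : Fin n, (j.val = i.val + 1 ∨ j.val + 1 = i.val) ∧ f j = true

def ZeroNbr {n : ℕ} (f : Fin n → Bool) : Prop :=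
  ∀ i : Fin n, f i = false →
    ∃ j : Fin n, (j.val = i.val + 1 ∨ j.val + 1 = i.val) ∧ f j = false

def Bimultus {n : ℕ} (f : Fin n → Bool) : Prop := Multus f ∧ ZeroNbr f

/-- Number of 1s in a bitstring. -/
def bitsum {n : ℕ} (f : Fin n → Bool) : ℕ := (Finset.univ.filter fun i => f i = true).card

/-- Total bitsum over all bimultus bitstrings of length `n`. -/
noncomputable def bimultusBitsum (n : ℕ) : ℕ :=
  ∑ f : Fin n → Bool, if Bimultus f then bitsum f else 0

/-! ### Auxiliary development -/

/-- Every position except possibly position 0 has an adjacent equal value. -/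
def Ehead {n : ℕ} (f : Fin n → Bool) : Prop :=
  ∀ i : Fin n, i.val ≠ 0 →
    ∃ j : Fin n, (j.val = i.val + 1 ∨ j.val + 1 = i.val) ∧ f j = f i

lemma bimultus_iff {n : ℕ} (f : Fin n → Bool) :
    Bimultus f ↔ ∀ i : Fin n,
      ∃ j : Fin n, (j.val = i.val + 1 ∨ j.val + 1 = i.val) ∧ f j = f i := by
  constructor
  · rintro ⟨h1, h0⟩ i
    cases hi : f i with
    | true => obtain ⟨j, hj, hj'⟩ := h1 i hi; exact ⟨j, hj, hj'⟩
    | false => obtain ⟨j, hj, hj'⟩ := h0 i hi; exact ⟨j, hj, hj'⟩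
  · intro h
    constructor
    · intro i hi; obtain ⟨j, hj, hj'⟩ := h i; exact ⟨j, hj, hj'.trans hi⟩
    · intro i hi; obtain ⟨j, hj, hj'⟩ := h i; exact ⟨j, hj, hj'.trans hi⟩

lemma ehead_of_bimultus {n : ℕ} {f : Fin n → Bool} (hf : Bimultus f) : Ehead f := by
  rw [bimultus_iff] at hf
  exact fun i _ => hf i

lemma tail_ehead {n : ℕ} {f : Fin (n + 2) → Bool} (hf : Ehead f) : Ehead (Fin.tail f) := by
  intro i hi
  obtain ⟨j, hj, hj'⟩ := hf i.succ (by simp [Fin.val_succ])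
  have hj0 : j ≠ 0 := by
    intro h; subst h
    simp only [Fin.val_zero, Fin.val_succ] at hj
    omega
  refine ⟨j.pred hj0, ?_, ?_⟩
  · have h1 : (j.pred hj0).val = j.val - 1 := rfl
    have h2 : j.val ≠ 0 := fun h => hj0 (Fin.ext h)
    simp only [Fin.val_succ] at hj
    omega
  · show f (j.pred hj0).succ = f i.succ
    rw [Fin.succ_pred]
    exact hj'

/-- Prepending a bit compatible at position 1 keeps `Ehead`. -/
lemma cons_ehead {n : ℕ} (b : Bool) {g : Fin (n + 1) → Bool} (hg : Ehead g)
    (hb : b = g 0 ∨ ∃ j : Fin (n + 1), j.val = 1 ∧ g j = g 0) :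
    Ehead (Fin.cons b g : Fin (n + 2) → Bool) := by
  intro i hi
  induction i using Fin.cases with
  | zero => simp at hi
  | succ k =>
    by_cases hk : k.val = 0
    · have hk0 : k = 0 := Fin.ext hk
      subst hk0
      rcases hb with hb | ⟨j, hj1, hj2⟩
      · refine ⟨0, Or.inr (by simp), ?_⟩
        simp [Fin.cons_zero, Fin.cons_succ, hb]
      · refine ⟨j.succ, Or.inl (by simp [Fin.val_succ, hj1]), ?_⟩
        simp [Fin.cons_succ, hj2]
    · obtain ⟨j, hj, hj'⟩ := hg k hk
      refine ⟨j.succ, ?_, ?_⟩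
      · simp only [Fin.val_succ]; omega
      · simp [Fin.cons_succ, hj']

/-- The tail bijection for bimultus strings. -/
noncomputable def equivB (n : ℕ) :
    {f : Fin (n + 2) → Bool // Bimultus f} ≃ {g : Fin (n + 1) → Bool // Ehead g} where
  toFun := fun ⟨f, hf⟩ => ⟨Fin.tail f, tail_ehead (ehead_of_bimultus hf)⟩
  invFun := fun ⟨g, hg⟩ => ⟨Fin.cons (g 0) g, by
    rw [bimultus_iff]
    have hE := cons_ehead (g 0) hg (Or.inl rfl)
    intro i
    induction i using Fin.cases with
    | zero =>
      refine ⟨Fin.succ 0, Or.inl (by simp), ?_⟩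
      simp [Fin.cons_zero, Fin.cons_succ]
    | succ k => exact hE k.succ (by simp [Fin.val_succ])⟩
  left_inv := fun ⟨f, hf⟩ => by
    apply Subtype.ext
    funext i
    induction i using Fin.cases with
    | zero =>
      show Fin.tail f 0 = f 0
      rw [bimultus_iff] at hf
      obtain ⟨j, hj, hj'⟩ := hf 0
      have hj1 : j = Fin.succ 0 := by
        apply Fin.ext
        simp only [Fin.val_zero] at hj
        simp only [Fin.val_succ, Fin.val_zero]
        omega
      rw [hj1] at hj'
      exact hj'
    | succ k => show Fin.tail f k = f k.succ; rfl
  right_inv := fun ⟨g, hg⟩ => Subtype.ext (by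
    show Fin.tail (Fin.cons (α := fun _ => Bool) (g 0) g) = g
    exact Fin.tail_cons (α := fun _ => Bool) (g 0) g)

/-- The tail bijection for `Ehead` strings. -/
noncomputable def equivE (n : ℕ) :
    {f : Fin (n + 2) → Bool // Ehead f} ≃
      {g : Fin (n + 1) → Bool // Ehead g} ⊕ {g : Fin (n + 1) → Bool // Bimultus g} := by
  refine ⟨fun ⟨f, hf⟩ =>
    if h : f 0 = f (Fin.succ 0) then Sum.inl ⟨Fin.tail f, tail_ehead hf⟩
    else Sum.inr ⟨Fin.tail f, ?_⟩,
    fun s => match s with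
      | Sum.inl ⟨g, hg⟩ => ⟨Fin.cons (g 0) g, cons_ehead (g 0) hg (Or.inl rfl)⟩
      | Sum.inr ⟨g, hg⟩ => ⟨Fin.cons (!(g 0)) g, cons_ehead (!(g 0)) (ehead_of_bimultus hg) ?_⟩,
    ?_, ?_⟩
  · -- tail is bimultus when f 0 ≠ f 1
    rw [bimultus_iff]
    intro i
    by_cases hi : i.val = 0
    · have hi0 : i = 0 := Fin.ext hi
      subst hi0
      obtain ⟨j, hj, hj'⟩ := hf (Fin.succ 0) (by simp)
      have hj0 : j ≠ 0 := by
        intro hz; subst hz; exact h hj'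
      refine ⟨j.pred hj0, ?_, ?_⟩
      · have h2 : j.val ≠ 0 := fun hh => hj0 (Fin.ext hh)
        simp only [Fin.val_succ, Fin.val_zero] at hj ⊢
        have h1 : (j.pred hj0).val = j.val - 1 := rfl
        omega
      · show f (j.pred hj0).succ = f (Fin.succ 0)
        rw [Fin.succ_pred]; exact hj'
    · exact tail_ehead hf i hi
  · -- position-1 witness for the `inr` branch
    right
    rw [bimultus_iff] at hg
    obtain ⟨j, hj, hj'⟩ := hg 0
    refine ⟨j, ?_, hj'⟩
    simp only [Fin.val_zero] at hj
    omega
  · -- left inverse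
    rintro ⟨f, hf⟩
    by_cases h : f 0 = f (Fin.succ 0)
    · simp only [dif_pos h]
      apply Subtype.ext
      funext i
      induction i using Fin.cases with
      | zero => show Fin.tail f 0 = f 0; rw [show Fin.tail f 0 = f (Fin.succ 0) from rfl, ← h]
      | succ k => show Fin.tail f k = f k.succ; rfl
    · simp only [dif_neg h]
      apply Subtype.ext
      funext i
      induction i using Fin.cases with
      | zero =>
        show (!(Fin.tail f 0)) = f 0
        have : Fin.tail f 0 = f (Fin.succ 0) := rfl
        rw [this]
        revert h
        cases hA : f 0 <;> cases hB : f (Fin.succ 0) <;> simp_all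
      | succ k => show Fin.tail f k = f k.succ; rfl
  · -- right inverse
    rintro (⟨g, hg⟩ | ⟨g, hg⟩)
    · have hcond : (Fin.cons (g 0) g : Fin (n + 2) → Bool) 0
          = (Fin.cons (g 0) g : Fin (n + 2) → Bool) (Fin.succ 0) := by
        rw [Fin.cons_zero, Fin.cons_succ]
      simp only [dif_pos hcond]
      congr 1
    · have hcond : ¬ ((Fin.cons (!(g 0)) g : Fin (n + 2) → Bool) 0
          = (Fin.cons (!(g 0)) g : Fin (n + 2) → Bool) (Fin.succ 0)) := by
        rw [Fin.cons_zero, Fin.cons_succ]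
        simp
      simp only [dif_neg hcond]
      congr 1

noncomputable def cB (n : ℕ) : ℕ := Nat.card {f : Fin n → Bool // Bimultus f}
noncomputable def cE (n : ℕ) : ℕ := Nat.card {f : Fin n → Bool // Ehead f}

lemma cB_succ (n : ℕ) : cB (n + 2) = cE (n + 1) := Nat.card_congr (equivB n)

lemma cE_succ (n : ℕ) : cE (n + 2) = cE (n + 1) + cB (n + 1) := by
  rw [cE, Nat.card_congr (equivE n), Nat.card_sum]; rfl

lemma cB_one : cB 1 = 0 := by
  have : IsEmpty {f : Fin 1 → Bool // Bimultus f} := by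
    constructor
    rintro ⟨f, hf⟩
    rw [bimultus_iff] at hf
    obtain ⟨j, hj, -⟩ := hf 0
    have := j.isLt
    simp only [Fin.val_zero] at hj
    omega
  simp [cB, Nat.card_of_isEmpty]

lemma cE_one : cE 1 = 2 := by
  have e : {f : Fin 1 → Bool // Ehead f} ≃ (Fin 1 → Bool) := by
    apply Equiv.subtypeUnivEquiv
    intro f i hi
    exact absurd (by omega : i.val = 0) hi
  rw [cE, Nat.card_congr e]
  simp [Nat.card_eq_fintype_card]

lemma cE_fib : ∀ n : ℕ, cE (n + 1) = 2 * Nat.fib (n + 1) := by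
  have key : ∀ n : ℕ, cE (n + 1) = 2 * Nat.fib (n + 1) ∧ cE (n + 2) = 2 * Nat.fib (n + 2) := by
    intro n
    induction n with
    | zero =>
      constructor
      · rw [cE_one]; rfl
      · rw [cE_succ, cE_one, cB_one]; rfl
    | succ m ih =>
      refine ⟨ih.2, ?_⟩
      have hfib : Nat.fib (m + 3) = Nat.fib (m + 1) + Nat.fib (m + 2) := Nat.fib_add_two
      rw [cE_succ, cB_succ, ih.1, ih.2, hfib]
      ring
  exact fun n => (key n).1

lemma cB_fib : ∀ n : ℕ, cB (n + 1) = 2 * Nat.fib n := by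
  intro n
  cases n with
  | zero => rw [cB_one]; rfl
  | succ m => rw [cB_succ, cE_fib]

/-- Complementation preserves bimultus-ness. -/
lemma bimultus_not {n : ℕ} {f : Fin n → Bool} (hf : Bimultus f) :
    Bimultus (fun i => !(f i)) := by
  rw [bimultus_iff] at hf ⊢
  intro i
  obtain ⟨j, hj, hj'⟩ := hf i
  exact ⟨j, hj, by rw [hj']⟩

lemma bitsum_le {n : ℕ} (f : Fin n → Bool) : bitsum f ≤ n := by
  calc bitsum f ≤ (Finset.univ : Finset (Fin n)).card := Finset.card_filter_le _ _
  _ = n := Finset.card_univ.trans (Fintype.card_fin n)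

lemma bitsum_not {n : ℕ} (f : Fin n → Bool) : bitsum (fun i => !(f i)) = n - bitsum f := by
  have h : bitsum (fun i => !(f i)) + bitsum f = n := by
    unfold bitsum
    have : (Finset.univ.filter fun i => (!(f i)) = true)
        = Finset.univ.filter fun i => ¬ (f i = true) := by
      apply Finset.filter_congr
      intro i _
      simp
    rw [this, add_comm, Finset.card_filter_add_card_filter_not]
    simp
  omega

lemma two_mul_bitsum (n : ℕ) : 2 * bimultusBitsum n = n * cB n := by
  have hcB : cB n = (Finset.univ.filter fun f : Fin n → Bool => Bimultus f).card := by
    rw [cB, Nat.card_eq_fintype_card, Fintype.card_subtype]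
  have hinv : Function.Involutive (fun (f : Fin n → Bool) => (fun i => !(f i))) := by
    intro f; funext i; simp
  have e1 : bimultusBitsum n = ∑ f : Fin n → Bool, if Bimultus f then bitsum f else 0 := rfl
  have hre : bimultusBitsum n
      = ∑ f : Fin n → Bool, if Bimultus f then n - bitsum f else 0 := by
    rw [e1]
    refine (Fintype.sum_equiv hinv.toPerm _ _ ?_).symm
    intro f
    show (if Bimultus f then n - bitsum f else 0)
      = if Bimultus (fun i => !(f i)) then bitsum (fun i => !(f i)) else 0
    by_cases hf : Bimultus f
    · rw [if_pos hf, if_pos (bimultus_not hf), bitsum_not]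
    · rw [if_neg hf, if_neg (fun hc => hf (by simpa [Bool.not_not] using bimultus_not hc))]
  calc 2 * bimultusBitsum n
      = (∑ f : Fin n → Bool, if Bimultus f then bitsum f else 0)
        + ∑ f : Fin n → Bool, if Bimultus f then n - bitsum f else 0 := by
        rw [← e1, ← hre, two_mul]
    _ = ∑ f : Fin n → Bool, ((if Bimultus f then bitsum f else 0)
        + (if Bimultus f then n - bitsum f else 0)) := Finset.sum_add_distrib.symm
    _ = ∑ f : Fin n → Bool, (if Bimultus f then n else 0) := by
        apply Finset.sum_congr rfl
        intro f _
        by_cases hf : Bimultus f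
        · simp only [if_pos hf]
          have := bitsum_le f
          omega
        · simp [hf]
    _ = n * cB n := by
        rw [← Finset.sum_filter, Finset.sum_const, smul_eq_mul, ← hcB, Nat.mul_comm]

lemma bitsum_formula (n : ℕ) : bimultusBitsum n = n * Nat.fib (n - 1) := by
  have h := two_mul_bitsum n
  have h2 : n * cB n = 2 * (n * Nat.fib (n - 1)) := by
    cases n with
    | zero => simp
    | succ m =>
      rw [cB_fib]
      simp only [Nat.add_sub_cancel]
      ring
  omega

open PowerSeries in
theorem bimultusBitsum_gf :
    (PowerSeries.mk (fun n => (bimultusBitsum n : ℤ))) *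
        ((1 - (X : ℤ⟦X⟧) - X ^ 2) ^ 2) = X ^ 2 * (2 - X) ∧
    bimultusBitsum 2 = 2 ∧ bimultusBitsum 3 = 3 ∧ bimultusBitsum 4 = 8 ∧
    bimultusBitsum 5 = 15 ∧ bimultusBitsum 6 = 30 := by
  have ha : ∀ m : ℕ, (bimultusBitsum m : ℤ) = (m : ℤ) * (Nat.fib (m - 1) : ℤ) := by
    intro m
    rw [bitsum_formula]
    push_cast
    ring
  refine ⟨?_, ?_, ?_, ?_, ?_, ?_⟩
  · set φ : ℤ⟦X⟧ := PowerSeries.mk (fun n => (bimultusBitsum n : ℤ)) with hφ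
    have h1 : φ * ((1 - (X : ℤ⟦X⟧) - X ^ 2) ^ 2)
        = φ - φ * X ^ 1 - φ * X ^ 1 - φ * X ^ 2 + φ * X ^ 3 + φ * X ^ 3 + φ * X ^ 4 := by
      ring
    have h2 : (X : ℤ⟦X⟧) ^ 2 * (2 - X) = X ^ 2 + X ^ 2 - X ^ 3 := by ring
    rw [h1, h2]
    ext n
    simp only [map_add, map_sub, PowerSeries.coeff_mul_X_pow', PowerSeries.coeff_X_pow, hφ,
      PowerSeries.coeff_mk]
    rcases n with _ | _ | _ | _ | _ | n
    · norm_num [ha]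
    · norm_num [ha]
    · norm_num [ha]
    · norm_num [ha, Nat.fib_one, Nat.fib_two]
    · have : Nat.fib 3 = 2 := by decide
      norm_num [ha, Nat.fib_one, Nat.fib_two, this]
    · have hc : ∀ k, (1 ≤ n + 5 - k) → True := fun _ _ => trivial
      have e1 : (1:ℕ) ≤ n + 5 := by omega
      have e2 : (2:ℕ) ≤ n + 5 := by omega
      have e3 : (3:ℕ) ≤ n + 5 := by omega
      have e4 : (4:ℕ) ≤ n + 5 := by omega
      rw [if_pos e1, if_pos e2, if_pos e3, if_pos e4,
        if_neg (by omega : ¬ (n + 5 = 2)), if_neg (by omega : ¬ (n + 5 = 3))]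
      have d1 : n + 5 - 1 = n + 4 := by omega
      have d2 : n + 5 - 2 = n + 3 := by omega
      have d3 : n + 5 - 3 = n + 2 := by omega
      have d4 : n + 5 - 4 = n + 1 := by omega
      rw [d1, d2, d3, d4, ha (n+5), ha (n+4), ha (n+3), ha (n+2), ha (n+1)]
      have s5 : n + 5 - 1 = n + 4 := by omega
      have s4 : n + 4 - 1 = n + 3 := by omega
      have s3 : n + 3 - 1 = n + 2 := by omega
      have s2 : n + 2 - 1 = n + 1 := by omega
      have s1 : n + 1 - 1 = n := by omega
      rw [s5, s4, s3, s2, s1]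
      have f4 : (Nat.fib (n + 4) : ℤ) = (Nat.fib (n + 3) : ℤ) + (Nat.fib (n + 2) : ℤ) := by
        have : Nat.fib (n + 4) = Nat.fib (n + 2) + Nat.fib (n + 3) := Nat.fib_add_two
        push_cast [this]; ring
      have f3 : (Nat.fib (n + 3) : ℤ) = (Nat.fib (n + 2) : ℤ) + (Nat.fib (n + 1) : ℤ) := by
        have : Nat.fib (n + 3) = Nat.fib (n + 1) + Nat.fib (n + 2) := Nat.fib_add_two
        push_cast [this]; ring
      have f2 : (Nat.fib (n + 2) : ℤ) = (Nat.fib (n + 1) : ℤ) + (Nat.fib n : ℤ) := by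
        have : Nat.fib (n + 2) = Nat.fib n + Nat.fib (n + 1) := Nat.fib_add_two
        push_cast [this]; ring
      rw [f4, f3, f2]
      push_cast
      ring
  · rw [bitsum_formula]; decide
  · rw [bitsum_formula]; decide
  · rw [bitsum_formula]; decide
  · rw [bitsum_formula]; decide
  · rw [bitsum_formula]; decide
end

section
/- Let a_n be the total bitsum summed over all persolus binary strings of length n. Then ∑_{n≥0} a_n z^n = z(1 - z + z^2)^2/(1 - z - z^3)^2 as formal power series; in particular a_1 = 1, a_2 = 0, a_3 = 2, a_4 = 4, a_5 = 5, a_6 = 10. -/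
open scoped Classical

def Solus {n : ℕ} (f : Fin n → Bool) : Prop :=
  ∀ i : ℕ, ∀ h : i + 1 < n, ¬(f ⟨i, by omega⟩ = true ∧ f ⟨i + 1, h⟩ = true)

def Persolus {n : ℕ} (f : Fin n → Bool) : Prop := Solus f ∧ ZeroNbr f

/-- Total bitsum over all persolus bitstrings of length `n`. -/
noncomputable def persolusBitsum (n : ℕ) : ℕ :=
  ∑ f : Fin n → Bool, if Persolus f then bitsum f else 0

/-!
Marking a `1` of a persolus word `u 1 v` splits it into the words `u 1` and `1 v`, and since
both defining constraints only look at neighbouring letters, `u 1 v` is persolus iff `u 1` and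
`1 v` are. Reversing `u 1` shows that both pieces are counted by `d n = afterOneCount n`, the
number of words `w` of length `n` with `1 w` persolus, so `a (n + 1) = ∑_{i + j = n} d i * d j`,
that is `A = z D²`. Such a `w` of length `n + 3` starts with `00`; the next letter is either `0`,
which can be dropped, or `1`, after which `1 0 0 1 w'` splits as above. Hence
`d (n + 3) = d (n + 2) + d n`, i.e. `D (1 - z - z³) = 1 - z + z²`.
-/

/-- Padding with a `1` on both sides turns a `0` without a `0`-neighbour into an occurrence
of `1 0 1`. -/
def List.Persolus (l : List Bool) : Prop :=
  l.IsChain (fun a b => ¬(a = true ∧ b = true)) ∧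
    ¬[true, false, true] <:+: true :: l ++ [true]

instance : DecidablePred List.Persolus := fun _ => inferInstanceAs (Decidable (_ ∧ _))

namespace List

variable {l u v x y : List Bool}

theorem infix_true_false_true_pad_true_cons :
    [true, false, true] <:+: true :: true :: l ++ [true] ↔
      [true, false, true] <:+: true :: l ++ [true] := by
  rw [cons_append, infix_cons_iff]
  simp

theorem infix_true_false_true_pad_append_true :
    [true, false, true] <:+: true :: (l ++ [true]) ++ [true] ↔
      [true, false, true] <:+: true :: l ++ [true] := by
  rw [← reverse_infix, ← reverse_infix (l₂ := true :: l ++ [true])]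
  simpa using infix_true_false_true_pad_true_cons (l := l.reverse)

theorem infix_true_false_true_append_true_cons :
    [true, false, true] <:+: x ++ true :: y ↔
      [true, false, true] <:+: x ++ [true] ∨ [true, false, true] <:+: true :: y := by
  induction x with
  | nil => simp [infix_cons_iff]
  | cons a x ih =>
    rw [cons_append, cons_append, infix_cons_iff, infix_cons_iff, ih, ← or_assoc]
    suffices [true, false, true] <+: a :: (x ++ true :: y) ↔
        [true, false, true] <+: a :: (x ++ [true]) by
      rw [this]
    rcases x with _ | ⟨b, _ | ⟨c, x⟩⟩ <;> simp

theorem persolus_reverse : l.reverse.Persolus ↔ l.Persolus := by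
  have hsymm :
      (fun a b : Bool => ¬(b = true ∧ a = true)) = fun a b => ¬(a = true ∧ b = true) := by
    simp only [and_comm]
  rw [Persolus, Persolus, isChain_reverse, hsymm, ← reverse_infix]
  simp

theorem persolus_append_true_cons :
    (u ++ true :: v).Persolus ↔ (u ++ [true]).Persolus ∧ (true :: v).Persolus := by
  have hpad : true :: (u ++ true :: v) ++ [true] = (true :: u) ++ true :: (v ++ [true]) := by
    simp
  rw [Persolus, Persolus, Persolus, isChain_split, hpad, infix_true_false_true_append_true_cons,
    infix_true_false_true_pad_append_true, infix_true_false_true_pad_true_cons]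
  tauto

theorem persolus_true_false_false_false_cons :
    (true :: false :: false :: false :: l).Persolus ↔ (true :: false :: false :: l).Persolus := by
  simp [Persolus, infix_cons_iff]

theorem not_persolus_true_true_cons : ¬(true :: true :: l).Persolus := by
  simp [Persolus]

theorem not_persolus_true_false_true_cons : ¬(true :: false :: true :: l).Persolus := by
  simp [Persolus, infix_cons_iff]

end List

theorem persolus_iff_ofFn {n : ℕ} (f : Fin n → Bool) :
    Persolus f ↔ (List.ofFn f).Persolus := by
  have hsolus : Solus f ↔ (List.ofFn f).IsChain (fun a b => ¬(a = true ∧ b = true)) := by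
    simp [Solus, List.isChain_iff_getElem]
  have hzero : ZeroNbr f ↔ ¬[true, false, true] <:+: true :: List.ofFn f ++ [true] := by
    rw [List.infix_iff_getElem?]
    simp only [List.length_cons, List.length_append, List.length_ofFn]
    constructor
    · rintro hz ⟨k, hk, hp⟩
      have h0 := hp 0 (by simp)
      have h1 := hp 1 (by simp)
      have h2 := hp 2 (by simp)
      grind [ZeroNbr]
    · intro hno i hi
      by_contra! hisolated
      refine hno ⟨i, by omega, fun m hm => ?_⟩
      replace hm : m < 3 := hm
      interval_cases m <;> grind
  rw [Persolus, List.Persolus, hsolus, hzero]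

open Finset

noncomputable def wordCount (n : ℕ) (p : List Bool → Prop) : ℕ :=
  #{w : Fin n → Bool | p (List.ofFn w)}

theorem wordCount_zero (p : List Bool → Prop) : wordCount 0 p = if p [] then 1 else 0 := by
  simp only [wordCount, univ_unique, filter_singleton, List.ofFn_zero]
  split_ifs <;> rfl

theorem wordCount_false (n : ℕ) : wordCount n (fun _ => False) = 0 := by
  simp [wordCount]

theorem wordCount_succ (n : ℕ) (p : List Bool → Prop) :
    wordCount (n + 1) p =
      wordCount n (fun l => p (false :: l)) + wordCount n (fun l => p (true :: l)) := by
  simp only [wordCount, card_filter]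
  rw [← (Fin.consEquiv fun _ => Bool).sum_comp, Fintype.sum_prod_type, Fintype.sum_bool, add_comm]
  simp [List.ofFn_succ]

theorem List.ofFn_comp_rev {α : Type*} {n : ℕ} (w : Fin n → α) :
    List.ofFn (w ∘ Fin.rev) = (List.ofFn w).reverse := by
  refine List.ext_getElem (by simp) fun i h₁ _ => ?_
  rw [List.length_ofFn] at h₁
  simp only [List.getElem_ofFn, Function.comp_apply, Fin.rev, List.getElem_reverse,
    List.length_ofFn]
  congr 2
  omega

theorem wordCount_reverse (n : ℕ) (p : List Bool → Prop) :
    wordCount n (fun l => p l.reverse) = wordCount n p := by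
  simp only [wordCount, card_filter]
  rw [← (Equiv.arrowCongr Fin.revPerm (Equiv.refl Bool)).sum_comp]
  refine sum_congr rfl fun w _ => ?_
  change (if p (List.ofFn (w ∘ Fin.rev)).reverse then 1 else 0) = _
  rw [List.ofFn_comp_rev, List.reverse_reverse]

theorem wordCount_add {m n : ℕ} {p q r : List Bool → Prop}
    (h : ∀ u v, u.length = m → v.length = n → (p (u ++ v) ↔ q u ∧ r v)) :
    wordCount (m + n) p = wordCount m q * wordCount n r := by
  simp only [wordCount, card_filter]
  rw [← (Fin.appendEquiv m n).sum_comp, Fintype.sum_prod_type, sum_mul_sum]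
  refine sum_congr rfl fun u _ => sum_congr rfl fun v _ => ?_
  change (if p (List.ofFn (Fin.append u v)) then 1 else 0) = _
  rw [List.ofFn_fin_append, h _ _ (by simp) (by simp), ite_zero_mul_ite_zero, one_mul]
  congr 1

noncomputable def afterOneCount (n : ℕ) : ℕ :=
  wordCount n fun l => (true :: l).Persolus

theorem afterOneCount_zero : afterOneCount 0 = 1 := by
  rw [afterOneCount, wordCount_zero, if_pos (by decide)]

theorem afterOneCount_one : afterOneCount 1 = 0 := by
  rw [afterOneCount, wordCount_succ, wordCount_zero, wordCount_zero, if_neg (by decide),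
    if_neg (by decide)]

theorem afterOneCount_add_two (n : ℕ) :
    afterOneCount (n + 2) = wordCount n fun l => (true :: false :: false :: l).Persolus := by
  simp only [afterOneCount, wordCount_succ, List.not_persolus_true_true_cons,
    List.not_persolus_true_false_true_cons, wordCount_false, add_zero]

theorem afterOneCount_two : afterOneCount 2 = 1 := by
  rw [afterOneCount_add_two, wordCount_zero, if_pos (by decide)]

theorem afterOneCount_add_three (n : ℕ) :
    afterOneCount (n + 3) = afterOneCount (n + 2) + afterOneCount n := by
  have hsplit (l : List Bool) :
      (true :: false :: false :: true :: l).Persolus ↔ (true :: l).Persolus := by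
    have h1001 : [true, false, false, true].Persolus := by decide
    simpa [h1001] using List.persolus_append_true_cons (u := [true, false, false]) (v := l)
  rw [afterOneCount_add_two (n + 1), wordCount_succ, afterOneCount_add_two]
  simp only [List.persolus_true_false_false_false_cons, hsplit, afterOneCount]

open PowerSeries in
theorem mk_afterOneCount_mul_eq :
    PowerSeries.mk (fun n => (afterOneCount n : ℤ)) * (1 - X - X ^ 3) = 1 - X + X ^ 2 := by
  ext n
  simp only [mul_sub, mul_one, map_sub, map_add, coeff_mk, coeff_one, coeff_X, coeff_X_pow,
    coeff_mul_X_pow']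
  rcases n with _ | _ | _ | n
  · simp [afterOneCount_zero]
  · simp [afterOneCount_zero, afterOneCount_one]
  · simp [afterOneCount_one, afterOneCount_two]
  · simp [afterOneCount_add_three]

theorem wordCount_append_true (n : ℕ) :
    wordCount n (fun l => (l ++ [true]).Persolus) = afterOneCount n := by
  rw [afterOneCount, ← wordCount_reverse n fun l => (true :: l).Persolus]
  simp only [← List.persolus_reverse (l := _ ++ [true]), List.reverse_append,
    List.reverse_singleton, List.singleton_append]

theorem card_persolus_apply_eq_true {n : ℕ} (k : Fin n) :
    #{f : Fin n → Bool | Persolus f ∧ f k = true} =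
      afterOneCount k * afterOneCount (n - 1 - k) := by
  obtain ⟨k, hk⟩ := k
  obtain ⟨m, rfl⟩ : ∃ m, n = k + (m + 1) := ⟨n - 1 - k, by omega⟩
  have hsplit (u w : List Bool) (hu : u.length = k) :
      ((u ++ w).Persolus ∧ (u ++ w)[k]? = some true) ↔
        (u ++ [true]).Persolus ∧ (w.head? = some true ∧ w.Persolus) := by
    rcases w with _ | ⟨_ | _, v⟩
    · simp [hu]
    · simp [hu]
    · simp [hu, ← List.persolus_append_true_cons]
  have hcount : #{f : Fin (k + (m + 1)) → Bool | Persolus f ∧ f ⟨k, hk⟩ = true} =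
      wordCount (k + (m + 1)) fun l => l.Persolus ∧ l[k]? = some true := by
    simp only [wordCount, persolus_iff_ofFn, List.getElem?_ofFn, dif_pos hk, Option.some.injEq]
  rw [hcount, wordCount_add fun u w hu _ => hsplit u w hu, wordCount_append_true, wordCount_succ]
  simp [afterOneCount, wordCount_false]

theorem persolusBitsum_eq_sum_card (n : ℕ) :
    persolusBitsum n = ∑ k : Fin n, #{f : Fin n → Bool | Persolus f ∧ f k = true} := by
  simp only [persolusBitsum, bitsum, card_filter]
  rw [sum_comm]
  refine sum_congr rfl fun f _ => ?_
  by_cases hf : Persolus f <;> simp [hf]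

theorem persolusBitsum_succ (n : ℕ) :
    persolusBitsum (n + 1) =
      ∑ ij ∈ antidiagonal n, afterOneCount ij.1 * afterOneCount ij.2 := by
  rw [persolusBitsum_eq_sum_card, Nat.sum_antidiagonal_eq_sum_range_succ_mk]
  simp only [card_persolus_apply_eq_true]
  rw [Fin.sum_univ_eq_sum_range (fun k => afterOneCount k * afterOneCount (n + 1 - 1 - k))]
  simp

open PowerSeries in
theorem mk_persolusBitsum_eq :
    PowerSeries.mk (fun n => (persolusBitsum n : ℤ)) =
      X * PowerSeries.mk (fun n => (afterOneCount n : ℤ)) ^ 2 := by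
  ext (_ | n)
  · simp [persolusBitsum_eq_sum_card]
  · rw [coeff_mk, coeff_succ_X_mul, sq, coeff_mul, persolusBitsum_succ]
    simp

open PowerSeries in
theorem persolusBitsum_gf :
    (PowerSeries.mk (fun n => (persolusBitsum n : ℤ))) *
        ((1 - (X : ℤ⟦X⟧) - X ^ 3) ^ 2) = X * (1 - X + X ^ 2) ^ 2 ∧
    persolusBitsum 1 = 1 ∧ persolusBitsum 2 = 0 ∧ persolusBitsum 3 = 2 ∧
    persolusBitsum 4 = 4 ∧ persolusBitsum 5 = 5 ∧ persolusBitsum 6 = 10 := by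
  have h3 := afterOneCount_add_three 0
  have h4 := afterOneCount_add_three 1
  have h5 := afterOneCount_add_three 2
  simp only [afterOneCount_zero, afterOneCount_one, afterOneCount_two] at h3 h4 h5
  refine ⟨?_, ?_⟩
  · rw [mk_persolusBitsum_eq, ← mk_afterOneCount_mul_eq]
    ring
  · simp [persolusBitsum_succ, Nat.antidiagonal_succ, afterOneCount_zero, afterOneCount_one,
      afterOneCount_two, h3, h4, h5]
end
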